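/- arXiv:1611.03571 — 4 statements merged into one kernel-verified Lean document; each statement's English description precedes it below -/
import Mathlib

section
/- For every real α with |α| ≤ 1, 2∫₀¹ arctan(αx)/(1+x²) dx = ∑_{n=0}^∞ (log 2 - Hₙ⁻) α^{2n+1}/(2n+1), where Hₙ⁻ = ∑_{k=1}^n (-1)^{k-1}/k. -/
open MeasureTheory Real

noncomputable def skewH (n : ℕ) : ℝ := ∑ k ∈ Finset.range n, (-1) ^ k / ((k : ℝ) + 1)

/-!
Expand `arctan (α * x) = ∑ (-1)ⁿ (α x)^(2n+1) / (2n+1)` and integrate termwise; this is legitimate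
because the `n`-th term, divided by `1 + x²`, is bounded by `xⁿ / (n + 1)` on `[0, 1]`, whose
integrals `1 / (n + 1)²` are summable. The odd moments `Iₙ = ∫₀¹ x^(2n+1) / (1 + x²)` satisfy
`I₀ = log 2 / 2` and `Iₙ₊₁ = 1 / (2n + 2) - Iₙ`, hence `Iₙ = (-1)ⁿ (log 2 - Hₙ⁻) / 2`.
-/

open Set

theorem hasSum_intervalIntegral_of_summable_integral_norm {ι E : Type*} [Countable ι]
    [NormedAddCommGroup E] [NormedSpace ℝ E] {a b : ℝ} (hab : a ≤ b) {F : ι → ℝ → E}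
    {f : ℝ → E} (hF_int : ∀ i, IntervalIntegrable (F i) volume a b)
    (hF_sum : Summable fun i ↦ ∫ x in a..b, ‖F i x‖) (hf : ∀ x ∈ Ioo a b, HasSum (F · x) (f x)) :
    HasSum (fun i ↦ ∫ x in a..b, F i x) (∫ x in a..b, f x) := by
  simp only [intervalIntegral.integral_of_le hab, integral_Ioc_eq_integral_Ioo] at hF_sum ⊢
  rw [setIntegral_congr_fun measurableSet_Ioo fun x hx ↦ (hf x hx).tsum_eq.symm]
  refine hasSum_integral_of_summable_integral_norm (fun i ↦ ?_) hF_sum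
  exact (hF_int i).1.mono_set Ioo_subset_Ioc_self

lemma neg_one_pow_sq {R : Type*} [Monoid R] [HasDistribNeg R] (n : ℕ) :
    ((-1 : R) ^ n) ^ 2 = 1 := by
  rw [← pow_mul, mul_comm, pow_mul, neg_one_sq, one_pow]

lemma skewH_succ (n : ℕ) : skewH (n + 1) = skewH n + (-1) ^ n / ((n : ℝ) + 1) :=
  Finset.sum_range_succ _ _

lemma intervalIntegrable_pow_div_one_add_sq (m : ℕ) (a b : ℝ) :
    IntervalIntegrable (fun x : ℝ ↦ x ^ m / (1 + x ^ 2)) volume a b :=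
  (continuous_pow m |>.div (by fun_prop) fun x ↦ by positivity).intervalIntegrable a b

lemma integral_id_div_one_add_sq : ∫ x in (0:ℝ)..1, x / (1 + x ^ 2) = log 2 / 2 := by
  have hderiv (x : ℝ) : HasDerivAt (fun y ↦ log (1 + y ^ 2) / 2) (x / (1 + x ^ 2)) x := by
    have := (((hasDerivAt_pow 2 x).const_add 1).log (by positivity)).div_const 2
    refine this.congr_deriv ?_
    field_simp
    ring
  rw [intervalIntegral.integral_eq_sub_of_hasDerivAt (fun x _ ↦ hderiv x)
    (by simpa using intervalIntegrable_pow_div_one_add_sq 1 0 1)]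
  norm_num

lemma integral_pow_add_two_div_one_add_sq (m : ℕ) :
    ∫ x in (0:ℝ)..1, x ^ (m + 2) / (1 + x ^ 2) =
      1 / ((m : ℝ) + 1) - ∫ x in (0:ℝ)..1, x ^ m / (1 + x ^ 2) := by
  have hsplit (x : ℝ) : x ^ (m + 2) / (1 + x ^ 2) = x ^ m - x ^ m / (1 + x ^ 2) := by
    have : 1 + x ^ 2 ≠ 0 := by positivity
    field_simp
    ring
  simp only [hsplit]
  rw [intervalIntegral.integral_sub (intervalIntegral.intervalIntegrable_pow _)
    (intervalIntegrable_pow_div_one_add_sq m 0 1), integral_pow]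
  norm_num

lemma integral_pow_odd_div_one_add_sq (n : ℕ) :
    ∫ x in (0:ℝ)..1, x ^ (2 * n + 1) / (1 + x ^ 2) = (-1) ^ n / 2 * (log 2 - skewH n) := by
  induction n with
  | zero => simpa [skewH, div_eq_inv_mul] using integral_id_div_one_add_sq
  | succ n ih =>
    rw [show 2 * (n + 1) + 1 = 2 * n + 1 + 2 by ring, integral_pow_add_two_div_one_add_sq, ih,
      skewH_succ, show ((2 * n + 1 : ℕ) : ℝ) + 1 = 2 * (n + 1) by push_cast; ring, one_div,
      mul_inv, pow_succ]
    linear_combination -(n + 1 : ℝ)⁻¹ / 2 * neg_one_pow_sq (R := ℝ) n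

lemma norm_arctan_term_le {α x : ℝ} (hα : |α| ≤ 1) (hx : x ∈ Icc (0:ℝ) 1) (n : ℕ) :
    ‖(-1) ^ n * α ^ (2 * n + 1) / (2 * n + 1) * (x ^ (2 * n + 1) / (1 + x ^ 2))‖ ≤
      x ^ n / (n + 1) := by
  have hα' : |α| ^ (2 * n + 1) ≤ 1 := pow_le_one₀ (abs_nonneg α) hα
  have hpow : x ^ (2 * n + 1) ≤ x ^ n := pow_le_pow_of_le_one hx.1 hx.2 (by omega)
  simp only [norm_mul, norm_div, norm_pow, norm_neg, norm_one, one_pow, one_mul, Real.norm_eq_abs,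
    abs_of_nonneg hx.1, abs_of_pos (by positivity : (0:ℝ) < 1 + x ^ 2),
    abs_of_pos (by positivity : (0:ℝ) < 2 * n + 1)]
  have hcoeff : |α| ^ (2 * n + 1) / (2 * n + 1) ≤ 1 / (n + 1) := by
    rw [div_le_div_iff₀ (by positivity) (by positivity)]
    nlinarith
  have hmoment : x ^ (2 * n + 1) / (1 + x ^ 2) ≤ x ^ n :=
    (div_le_self (pow_nonneg hx.1 _) (by nlinarith)).trans hpow
  calc |α| ^ (2 * n + 1) / (2 * n + 1) * (x ^ (2 * n + 1) / (1 + x ^ 2))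
      ≤ 1 / (n + 1) * x ^ n :=
        mul_le_mul hcoeff hmoment (div_nonneg (pow_nonneg hx.1 _) (by positivity)) (by positivity)
    _ = x ^ n / (n + 1) := by ring

lemma hasSum_integral_arctan_mul_div_one_add_sq {α : ℝ} (hα : |α| ≤ 1) :
    HasSum (fun n : ℕ ↦ (-1) ^ n * α ^ (2 * n + 1) / (2 * n + 1) *
        ∫ x in (0:ℝ)..1, x ^ (2 * n + 1) / (1 + x ^ 2))
      (∫ x in (0:ℝ)..1, arctan (α * x) / (1 + x ^ 2)) := by
  simp_rw [← intervalIntegral.integral_const_mul]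
  refine hasSum_intervalIntegral_of_summable_integral_norm zero_le_one
    (fun n ↦ (intervalIntegrable_pow_div_one_add_sq _ 0 1).const_mul _) ?_ fun x hx ↦ ?_
  · refine .of_nonneg_of_le
      (fun n ↦ intervalIntegral.integral_nonneg zero_le_one fun x _ ↦ norm_nonneg _)
      (fun n ↦ ?_) ((summable_nat_add_iff 1).mpr (Real.summable_one_div_nat_pow.mpr one_lt_two))
    calc _ ≤ ∫ x in (0:ℝ)..1, x ^ n / (n + 1) :=
          intervalIntegral.integral_mono_on zero_le_one
            ((intervalIntegrable_pow_div_one_add_sq _ 0 1).const_mul _).norm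
            ((intervalIntegral.intervalIntegrable_pow n).div_const _)
            fun x hx ↦ norm_arctan_term_le hα hx n
      _ = 1 / ((n + 1 : ℕ) : ℝ) ^ 2 := by
        rw [intervalIntegral.integral_div, integral_pow]
        simp [sq, div_eq_mul_inv]
  · have hαx : ‖α * x‖ < 1 := by
      rw [norm_mul, Real.norm_eq_abs, Real.norm_eq_abs, abs_of_pos hx.1]
      nlinarith [mul_le_mul_of_nonneg_right hα hx.1.le, hx.2]
    refine ((hasSum_arctan hαx).div_const (1 + x ^ 2)).congr_fun fun n ↦ ?_
    push_cast
    ring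

theorem stmt3 (α : ℝ) (h : |α| ≤ 1) :
    2 * ∫ x in (0:ℝ)..1, Real.arctan (α * x) / (1 + x ^ 2) =
      ∑' n : ℕ, (Real.log 2 - skewH n) * α ^ (2 * n + 1) / (2 * (n : ℝ) + 1) := by
  refine ((hasSum_integral_arctan_mul_div_one_add_sq h).mul_left 2).tsum_eq.symm.trans
    (tsum_congr fun n ↦ ?_)
  rw [integral_pow_odd_div_one_add_sq]
  linear_combination
    (log 2 - skewH n) * α ^ (2 * n + 1) / (2 * n + 1) * neg_one_pow_sq (R := ℝ) n
end

section
/- π³ = 192 ∑_{n=1}^∞ (hₙ/n)(∑_{k=1}^n (-1)^{k-1}/(2k-1) - π/4), where hₙ = ∑_{k=1}^n 1/(2k-1). -/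
/-!
Squaring the arctangent series by the Cauchy product and splitting
`1 / ((2i+1)(2j+1)) = (1/(2i+1) + 1/(2j+1)) / (2(i+j) + 2)` gives
`arctan x ^ 2 = ∑ (-1)^n hₙ₊₁/(n+1) x^(2n+2)` for `|x| < 1`. On the other hand the tail of the
Leibniz series is `∑_{k ≤ n} (-1)^k/(2k+1) - π/4 = (-1)^n ∫₀¹ x^(2n+2)/(1+x²) dx`. Hence the series
of the theorem is `∫₀¹ arctan x ^ 2 / (1 + x²) dx = π³/192`; the interchange of sum and integral is
justified by `hₙ ≤ 2√n`, which makes the integrals of the absolute values summable.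
-/

open Real

noncomputable def oddH (n : ℕ) : ℝ := ∑ k ∈ Finset.range n, 1 / (2 * (k : ℝ) + 1)

open MeasureTheory Finset

lemma oddH_succ (n : ℕ) : oddH (n + 1) = oddH n + 1 / (2 * n + 1) :=
  sum_range_succ _ _

lemma oddH_nonneg (n : ℕ) : 0 ≤ oddH n :=
  sum_nonneg fun _ _ ↦ by positivity

lemma oddH_le_two_mul_sqrt (n : ℕ) : oddH n ≤ 2 * √n := by
  induction n with
  | zero => simp [oddH]
  | succ n ih =>
    set s := √(n : ℝ)
    set t := √((n + 1 : ℕ) : ℝ)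
    -- `t - s = 1 / (t + s)` and `t + s ≤ 2 (2n + 1)`
    have hdiff : (t + s) * (t - s) = 1 := by
      rw [← sq_sub_sq, sq_sqrt (by positivity), sq_sqrt (by positivity)]
      push_cast; ring
    have hst : s ≤ t := sqrt_le_sqrt (by simp)
    have ht : t ≤ n + 1 := by
      rw [sqrt_le_left (by positivity)]; push_cast; nlinarith
    have hstep : 1 / (2 * (n : ℝ) + 1) ≤ 2 * (t - s) := by
      rw [div_le_iff₀ (by positivity)]
      nlinarith [sqrt_nonneg (n : ℝ)]
    rw [oddH_succ]
    linarith

lemma sum_antidiagonal_one_div_odd_mul_odd (n : ℕ) :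
    ∑ p ∈ antidiagonal n, 1 / ((2 * (p.1 : ℝ) + 1) * (2 * p.2 + 1)) = oddH (n + 1) / (n + 1) := by
  have hsplit : ∀ p ∈ antidiagonal n, 1 / ((2 * (p.1 : ℝ) + 1) * (2 * p.2 + 1))
      = (1 / (2 * (p.1 : ℝ) + 1) + 1 / (2 * (p.2 : ℝ) + 1)) / (2 * (n + 1)) := by
    intro p hp
    have hn : (p.1 : ℝ) + p.2 = n := by exact_mod_cast mem_antidiagonal.mp hp
    rw [← hn]
    field_simp
    ring
  have hfst : ∑ p ∈ antidiagonal n, 1 / (2 * (p.1 : ℝ) + 1) = oddH (n + 1) :=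
    Nat.sum_antidiagonal_eq_sum_range_succ_mk _ n
  have hsnd : ∑ p ∈ antidiagonal n, 1 / (2 * (p.2 : ℝ) + 1) = oddH (n + 1) :=
    (Nat.sum_antidiagonal_swap (f := fun p ↦ 1 / (2 * (p.1 : ℝ) + 1))).trans hfst
  rw [sum_congr rfl hsplit, ← sum_div, sum_add_distrib, hfst, hsnd]
  field_simp
  ring

/-- The coefficient of `x ^ (2 * n + 2)` in the power series of `arctan x ^ 2`. -/
noncomputable def arctanSqCoeff (n : ℕ) : ℝ := (-1) ^ n * (oddH (n + 1) / (n + 1))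

lemma summable_norm_arctan_series {x : ℝ} (hx : |x| < 1) :
    Summable fun j : ℕ ↦ ‖(-1) ^ j * x ^ (2 * j + 1) / ((2 * j + 1 : ℕ) : ℝ)‖ := by
  refine .of_nonneg_of_le (fun _ ↦ norm_nonneg _) (fun j ↦ ?_)
    (summable_geometric_of_lt_one (sq_nonneg x) (by simpa [sq_lt_one_iff_abs_lt_one]))
  calc ‖(-1) ^ j * x ^ (2 * j + 1) / ((2 * j + 1 : ℕ) : ℝ)‖ = |x| ^ (2 * j + 1) / (2 * j + 1) := by
        simp [abs_of_nonneg (by positivity : (0 : ℝ) ≤ 2 * j + 1)]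
    _ ≤ |x| ^ (2 * j + 1) := div_le_self (by positivity) (by linarith [j.cast_nonneg (α := ℝ)])
    _ = (x ^ 2) ^ j * |x| := by rw [pow_succ, pow_mul, sq_abs]
    _ ≤ (x ^ 2) ^ j := mul_le_of_le_one_right (by positivity) hx.le

lemma hasSum_arctan_sq {x : ℝ} (hx : |x| < 1) :
    HasSum (fun n ↦ arctanSqCoeff n * x ^ (2 * n + 2)) (arctan x ^ 2) := by
  have ha := summable_norm_arctan_series hx
  have hcoeff : ∀ n, ∑ p ∈ antidiagonal n,
      (-1) ^ p.1 * x ^ (2 * p.1 + 1) / ((2 * p.1 + 1 : ℕ) : ℝ) *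
        ((-1) ^ p.2 * x ^ (2 * p.2 + 1) / ((2 * p.2 + 1 : ℕ) : ℝ))
      = arctanSqCoeff n * x ^ (2 * n + 2) := by
    intro n
    rw [arctanSqCoeff, ← sum_antidiagonal_one_div_odd_mul_odd, mul_assoc, mul_comm, sum_mul,
      sum_mul]
    refine sum_congr rfl fun p hp ↦ ?_
    obtain rfl := mem_antidiagonal.mp hp
    push_cast
    rw [one_div, mul_inv]
    ring
  have := (summable_norm_sum_mul_antidiagonal_of_summable_norm ha ha).of_norm.hasSum
  rw [← tsum_mul_tsum_eq_tsum_sum_antidiagonal_of_summable_norm ha ha,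
    (hasSum_arctan (by rwa [norm_eq_abs])).tsum_eq, ← sq] at this
  simpa only [hcoeff] using this

lemma sum_range_neg_one_pow_mul_pow_two_mul (x : ℝ) (n : ℕ) :
    ∑ k ∈ range n, (-1) ^ k * x ^ (2 * k)
      = 1 / (1 + x ^ 2) - (-1) ^ n * (x ^ (2 * n) / (1 + x ^ 2)) := by
  have hpow : ∀ k : ℕ, (-x ^ 2) ^ k = (-1) ^ k * x ^ (2 * k) := fun k ↦ by rw [neg_pow, pow_mul]
  have hgeom := geom_sum_eq (x := -x ^ 2) (by nlinarith) n
  simp only [hpow] at hgeom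
  rw [hgeom]
  have : 1 + x ^ 2 ≠ 0 := by positivity
  have : -x ^ 2 - 1 ≠ 0 := by nlinarith
  field_simp
  ring

lemma continuous_pow_div_one_add_sq (m : ℕ) : Continuous fun x : ℝ ↦ x ^ m / (1 + x ^ 2) :=
  (continuous_pow m).div (by fun_prop) fun x ↦ by positivity

lemma sum_range_neg_one_pow_div_odd (n : ℕ) :
    ∑ k ∈ range n, (-1) ^ k / (2 * (k : ℝ) + 1)
      = π / 4 - (-1) ^ n * ∫ x in (0 : ℝ)..1, x ^ (2 * n) / (1 + x ^ 2) := by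
  have hint : ∫ x in (0 : ℝ)..1, ∑ k ∈ range n, (-1) ^ k * x ^ (2 * k)
      = ∑ k ∈ range n, (-1) ^ k / (2 * (k : ℝ) + 1) := by
    rw [intervalIntegral.integral_finsetSum fun k _ ↦
      (by fun_prop : Continuous _).intervalIntegrable _ _]
    refine sum_congr rfl fun k _ ↦ ?_
    rw [intervalIntegral.integral_const_mul, integral_pow]
    push_cast
    ring
  have h₁ : IntervalIntegrable (fun x : ℝ ↦ 1 / (1 + x ^ 2)) volume 0 1 :=
    (continuous_const.div (by fun_prop) fun x ↦ by positivity).intervalIntegrable _ _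
  have h₂ : IntervalIntegrable (fun x : ℝ ↦ (-1) ^ n * (x ^ (2 * n) / (1 + x ^ 2))) volume 0 1 :=
    ((continuous_pow_div_one_add_sq _).const_mul _).intervalIntegrable _ _
  simp_rw [← hint, sum_range_neg_one_pow_mul_pow_two_mul]
  rw [intervalIntegral.integral_sub h₁ h₂, intervalIntegral.integral_const_mul,
    integral_one_div_one_add_sq, arctan_one, arctan_zero, sub_zero]

lemma integral_arctan_sq_div_one_add_sq :
    ∫ x in (0 : ℝ)..1, arctan x ^ 2 / (1 + x ^ 2) = π ^ 3 / 192 := by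
  have hderiv : ∀ x ∈ Set.uIcc (0 : ℝ) 1,
      HasDerivAt (fun y ↦ arctan y ^ 3 / 3) (arctan x ^ 2 / (1 + x ^ 2)) x := by
    intro x _
    refine (((hasDerivAt_arctan x).fun_pow 3).div_const 3).congr_deriv ?_
    field_simp
    norm_num
  have hcont : Continuous fun x ↦ arctan x ^ 2 / (1 + x ^ 2) :=
    (continuous_arctan.pow 2).div (by fun_prop) fun x ↦ by positivity
  rw [intervalIntegral.integral_eq_sub_of_hasDerivAt hderiv (hcont.intervalIntegrable _ _),
    arctan_one, arctan_zero]
  ring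

lemma integral_Ioo_zero_one (f : ℝ → ℝ) : ∫ x in Set.Ioo 0 1, f x = ∫ x in (0 : ℝ)..1, f x := by
  rw [intervalIntegral.integral_of_le zero_le_one, integral_Ioc_eq_integral_Ioo]

lemma integral_norm_mul_pow_div_one_add_sq_le (c : ℝ) (m : ℕ) :
    ∫ x in Set.Ioo 0 1, ‖c * (x ^ m / (1 + x ^ 2))‖ ≤ |c| / (m + 1) := by
  have hle : ∀ x ∈ Set.Ioo (0 : ℝ) 1, ‖c * (x ^ m / (1 + x ^ 2))‖ ≤ |c| * x ^ m := by
    rintro x ⟨hx₀, -⟩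
    rw [norm_mul, norm_div, norm_pow, norm_eq_abs, norm_eq_abs, norm_eq_abs, abs_of_pos hx₀,
      abs_of_pos (by positivity : 0 < 1 + x ^ 2)]
    gcongr
    exact div_le_self (by positivity) (by nlinarith)
  calc ∫ x in Set.Ioo 0 1, ‖c * (x ^ m / (1 + x ^ 2))‖ ≤ ∫ x in Set.Ioo 0 1, |c| * x ^ m :=
        setIntegral_mono_on
          (((continuous_pow_div_one_add_sq m).const_mul c).norm.integrableOn_Icc.mono_set
            Set.Ioo_subset_Icc_self)
          ((continuous_const.mul (continuous_pow m)).integrableOn_Icc.mono_set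
            Set.Ioo_subset_Icc_self) measurableSet_Ioo hle
    _ = |c| / (m + 1) := by
        rw [integral_Ioo_zero_one, intervalIntegral.integral_const_mul, integral_pow]
        simp [div_eq_mul_inv]

lemma abs_arctanSqCoeff_le (n : ℕ) : |arctanSqCoeff n| ≤ 2 / √(n + 1) := by
  have hn : (0 : ℝ) < n + 1 := by positivity
  have hsqrt : √((n : ℝ) + 1) * √((n : ℝ) + 1) = n + 1 := mul_self_sqrt hn.le
  have hH : oddH (n + 1) ≤ 2 * √((n : ℝ) + 1) := by exact_mod_cast oddH_le_two_mul_sqrt (n + 1)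
  rw [arctanSqCoeff, abs_mul, abs_pow, abs_neg, abs_one, one_pow, one_mul,
    abs_of_nonneg (div_nonneg (oddH_nonneg _) hn.le), div_le_div_iff₀ hn (by positivity)]
  nlinarith [mul_le_mul_of_nonneg_right hH (sqrt_nonneg ((n : ℝ) + 1))]

lemma summable_abs_arctanSqCoeff_div :
    Summable fun n : ℕ ↦ |arctanSqCoeff n| / (2 * n + 3) := by
  refine .of_nonneg_of_le (fun n ↦ by positivity) (fun n ↦ ?_)
    ((summable_one_div_nat_add_rpow 1 (3 / 2)).mpr (by norm_num))
  have hn : (0 : ℝ) < n + 1 := by positivity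
  have hpow : |(n : ℝ) + 1| ^ ((3 : ℝ) / 2) = √((n : ℝ) + 1) * (n + 1) := by
    rw [abs_of_pos hn, rpow_div_two_eq_sqrt _ hn.le, show (3 : ℝ) = (3 : ℕ) by norm_num,
      rpow_natCast]
    linear_combination √((n : ℝ) + 1) * sq_sqrt hn.le
  rw [hpow]
  calc |arctanSqCoeff n| / (2 * n + 3) ≤ 2 / √(n + 1) / (2 * (n + 1)) :=
        div_le_div₀ (by positivity) (abs_arctanSqCoeff_le n) (by positivity) (by linarith)
    _ = 1 / (√(n + 1) * (n + 1)) := by field_simp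

theorem stmt7 :
    Real.pi ^ 3 =
      192 * ∑' n : ℕ, (oddH (n + 1) / ((n : ℝ) + 1)) *
        ((∑ k ∈ Finset.range (n + 1), (-1) ^ k / (2 * (k : ℝ) + 1)) - Real.pi / 4) := by
  set F : ℕ → ℝ → ℝ := fun n x ↦ arctanSqCoeff n * (x ^ (2 * n + 2) / (1 + x ^ 2))
  have hterm : ∀ n : ℕ, (oddH (n + 1) / ((n : ℝ) + 1)) *
      ((∑ k ∈ range (n + 1), (-1) ^ k / (2 * (k : ℝ) + 1)) - π / 4)
        = ∫ x in Set.Ioo 0 1, F n x := by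
    intro n
    rw [integral_const_mul, integral_Ioo_zero_one, sum_range_neg_one_pow_div_odd, arctanSqCoeff]
    ring_nf
  have hint : ∀ n, IntegrableOn (F n) (Set.Ioo 0 1) := fun n ↦
    (((continuous_pow_div_one_add_sq _).const_mul _).integrableOn_Icc).mono_set
      Set.Ioo_subset_Icc_self
  have hsum : Summable fun n ↦ ∫ x in Set.Ioo 0 1, ‖F n x‖ :=
    .of_nonneg_of_le (fun n ↦ integral_nonneg fun _ ↦ norm_nonneg _)
      (fun n ↦ (integral_norm_mul_pow_div_one_add_sq_le _ _).trans_eq (by push_cast; ring))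
      summable_abs_arctanSqCoeff_div
  have hpoint : ∀ x ∈ Set.Ioo (0 : ℝ) 1, ∑' n, F n x = arctan x ^ 2 / (1 + x ^ 2) := by
    rintro x ⟨hx₀, hx₁⟩
    simpa only [F, mul_div_assoc] using
      ((hasSum_arctan_sq (abs_lt.mpr ⟨by linarith, hx₁⟩)).div_const (1 + x ^ 2)).tsum_eq
  rw [tsum_congr hterm, integral_tsum_of_summable_integral_norm hint hsum,
    setIntegral_congr_fun measurableSet_Ioo hpoint, integral_Ioo_zero_one,
    integral_arctan_sq_div_one_add_sq]
  ring
end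

section
/- For every real β with |β| ≤ 1 and every natural p ≥ 0, ∫₀¹ (log x)^p · log(1-βx) / x dx = (-1)^{p+1} p! Li_{p+2}(β). -/
open MeasureTheory Real

noncomputable def Li (q : ℕ) (x : ℝ) : ℝ := ∑' n : ℕ, x ^ (n + 1) / ((n : ℝ) + 1) ^ q

/-!
Expand `log (1 - β x) / x = -∑ βⁿ⁺¹ xⁿ / (n + 1)` and integrate termwise against `(log x)ᵖ`.
The substitution `x = e⁻ᵗ` turns `∫₀¹ xⁿ (-log x)ᵖ dx` into a Gamma integral, equal to
`p! / (n + 1)ᵖ⁺¹`. Since `|β| ≤ 1`, the absolute values of the resulting terms are bounded by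
`p! / (n + 1)ᵖ⁺²`, which is summable, so the interchange of sum and integral is justified.
-/

open Set

lemma image_exp_neg_Ioi_zero : (fun t : ℝ => exp (-t)) '' Ioi 0 = Ioo 0 1 := by
  ext x
  constructor
  · rintro ⟨t, ht, rfl⟩
    exact ⟨exp_pos _, exp_lt_one_iff.mpr (by simpa using ht)⟩
  · rintro ⟨hx0, hx1⟩
    exact ⟨-log x, by simpa using log_neg hx0 hx1, by simp [exp_log hx0]⟩

theorem integral_Ioo_rpow_mul_neg_log_rpow {s a : ℝ} (hs : -1 < s) (ha : -1 < a) :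
    ∫ x in Ioo 0 1, x ^ s * (-log x) ^ a = Gamma (a + 1) / (s + 1) ^ (a + 1) := by
  have hderiv : ∀ t ∈ Ioi (0 : ℝ),
      HasDerivWithinAt (fun t => exp (-t)) (-exp (-t)) (Ioi 0) t := fun t _ => by
    simpa using ((hasDerivAt_neg t).exp).hasDerivWithinAt
  have hinj : InjOn (fun t : ℝ => exp (-t)) (Ioi 0) := fun t₁ _ t₂ _ h => by
    simpa using exp_injective h
  rw [← image_exp_neg_Ioi_zero,
    integral_image_eq_integral_abs_deriv_smul measurableSet_Ioi hderiv hinj]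
  have hsubst : ∀ t ∈ Ioi (0 : ℝ), |-exp (-t)| • (exp (-t) ^ s * (-log (exp (-t))) ^ a)
      = t ^ (a + 1 - 1) * exp (-((s + 1) * t)) := fun t _ => by
    rw [smul_eq_mul, abs_neg, abs_of_pos (exp_pos _), log_exp, neg_neg, add_sub_cancel_right,
      ← exp_mul, show -((s + 1) * t) = -t + -t * s by ring, exp_add]
    ring
  rw [setIntegral_congr_fun measurableSet_Ioi hsubst,
    integral_rpow_mul_exp_neg_mul_Ioi (by linarith) (by linarith),
    div_rpow zero_le_one (by linarith), one_rpow]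
  ring

theorem integral_Ioo_pow_mul_neg_log_pow (n p : ℕ) :
    ∫ x in Ioo 0 1, x ^ n * (-log x) ^ p = (Nat.factorial p : ℝ) / ((n : ℝ) + 1) ^ (p + 1) := by
  have h := integral_Ioo_rpow_mul_neg_log_rpow (s := n) (a := p)
    (neg_one_lt_zero.trans_le n.cast_nonneg) (neg_one_lt_zero.trans_le p.cast_nonneg)
  simp only [rpow_natCast, Gamma_nat_eq_factorial] at h
  rw [h, ← Nat.cast_succ p, rpow_natCast]

theorem integrableOn_Ioo_pow_mul_neg_log_pow (n p : ℕ) :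
    IntegrableOn (fun x => x ^ n * (-log x) ^ p) (Ioo 0 1) :=
  -- a non-integrable function would have Bochner integral `0`
  Integrable.of_integral_ne_zero (by rw [integral_Ioo_pow_mul_neg_log_pow]; positivity)

theorem hasSum_integral_Ioo_mul_pow_mul_neg_log_pow {a : ℕ → ℝ} (p : ℕ)
    (ha : Summable fun n => |a n| / ((n : ℝ) + 1) ^ (p + 1)) :
    HasSum (fun n => a n * ((Nat.factorial p : ℝ) / ((n : ℝ) + 1) ^ (p + 1)))
      (∫ x in Ioo 0 1, ∑' n, a n * (x ^ n * (-log x) ^ p)) := by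
  have hint n := (integrableOn_Ioo_pow_mul_neg_log_pow n p).const_mul (a n)
  have hnorm n : ∫ x in Ioo 0 1, ‖a n * (x ^ n * (-log x) ^ p)‖
      = |a n| * ((Nat.factorial p : ℝ) / ((n : ℝ) + 1) ^ (p + 1)) := by
    rw [← integral_Ioo_pow_mul_neg_log_pow, ← integral_const_mul]
    refine setIntegral_congr_fun measurableSet_Ioo fun x hx => ?_
    have hlog : 0 ≤ -log x := neg_nonneg.mpr (log_nonpos hx.1.le hx.2.le)
    rw [norm_mul, norm_eq_abs (a n),
      norm_of_nonneg (mul_nonneg (pow_nonneg hx.1.le n) (pow_nonneg hlog p))]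
  have hsum : Summable fun n => ∫ x in Ioo 0 1, ‖a n * (x ^ n * (-log x) ^ p)‖ := by
    simp_rw [hnorm, mul_div, ← div_mul_eq_mul_div]
    exact ha.mul_right _
  simpa only [integral_const_mul, integral_Ioo_pow_mul_neg_log_pow] using
    hasSum_integral_of_summable_integral_norm hint hsum

theorem hasSum_neg_log_one_sub_mul_div {β x : ℝ} (hx : x ≠ 0)
    (hβx : |β * x| < 1) :
    HasSum (fun n : ℕ => β ^ (n + 1) / (n + 1) * x ^ n) (-log (1 - β * x) / x) := by
  have hterm : (fun n : ℕ => β ^ (n + 1) / (n + 1) * x ^ n)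
      = fun n : ℕ => (β * x) ^ (n + 1) / (n + 1) / x := by
    ext n
    field_simp
    ring
  simpa only [hterm] using (hasSum_pow_div_log_of_abs_lt_one hβx).div_const x

theorem log_pow_mul_log_one_sub_mul_div_eq_tsum {β x : ℝ} (p : ℕ) (hx : x ≠ 0)
    (hβx : |β * x| < 1) :
    log x ^ p * log (1 - β * x) / x
      = (-1) ^ (p + 1) * ∑' n : ℕ, β ^ (n + 1) / (n + 1) * (x ^ n * (-log x) ^ p) := by
  simp_rw [← mul_assoc]
  rw [tsum_mul_right, (hasSum_neg_log_one_sub_mul_div hx hβx).tsum_eq]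
  conv_lhs => rw [← neg_neg (log x), neg_pow]
  ring

theorem summable_abs_pow_succ_div_div_pow {β : ℝ} (h : |β| ≤ 1) {q : ℕ} (hq : 1 ≤ q) :
    Summable fun n : ℕ => |β ^ (n + 1) / (n + 1)| / ((n : ℝ) + 1) ^ q := by
  have hdom : Summable fun n : ℕ => 1 / ((n : ℝ) + 1) ^ (q + 1) := by
    simpa using (summable_nat_add_iff 1).mpr (summable_one_div_nat_pow.mpr (by omega))
  refine hdom.of_nonneg_of_le (fun n => by positivity) fun n => ?_
  rw [abs_div, abs_pow, abs_of_pos (Nat.cast_add_one_pos (α := ℝ) n), div_div, ← pow_succ']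
  gcongr
  exact pow_le_one₀ (abs_nonneg β) h

theorem stmt15 (β : ℝ) (h : |β| ≤ 1) (p : ℕ) :
    ∫ x in (0:ℝ)..1, (Real.log x) ^ p * Real.log (1 - β * x) / x =
      (-1) ^ (p + 1) * (Nat.factorial p : ℝ) * Li (p + 2) β := by
  have hexpand : ∀ x ∈ Ioo (0 : ℝ) 1, log x ^ p * log (1 - β * x) / x
      = (-1) ^ (p + 1) * ∑' n : ℕ, β ^ (n + 1) / (n + 1) * (x ^ n * (-log x) ^ p) :=
    fun x hx => log_pow_mul_log_one_sub_mul_div_eq_tsum p hx.1.ne' <| by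
      rw [abs_mul, abs_of_pos hx.1]
      nlinarith [abs_nonneg β, hx.1, hx.2]
  rw [intervalIntegral.integral_of_le zero_le_one, integral_Ioc_eq_integral_Ioo,
    setIntegral_congr_fun measurableSet_Ioo hexpand, integral_const_mul,
    ← (hasSum_integral_Ioo_mul_pow_mul_neg_log_pow p
      (summable_abs_pow_succ_div_div_pow h (q := p + 1) (by omega))).tsum_eq,
    Li, mul_assoc, ← tsum_mul_left (a := (Nat.factorial p : ℝ))]
  congr 2 with n
  field_simp
  ring
end

section
/- ∫₀^∞ arctan(t) · arctan(1/t) / t dt = (7/4) ζ(3). -/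
/-!
Since `arctan t / t = ∫₀¹ du / (1 + t²u²)` and `arctan (1/t) = ∫₀¹ t dv / (t² + v²)`, the integral
is the integral over `(0, ∞) × (0, 1)²` of the nonnegative kernel `t / ((1 + t²u²)(t² + v²))`.
Integrating first in `t` gives `-log (uv) / (1 - u²v²)`; expanding the geometric series, the
`n`-th term `∫₀¹∫₀¹ -log (uv) (uv)^(2n) du dv` equals `2 / (2n + 1)³`, and
`∑ 1 / (2n + 1)³ = (7/8) ζ(3)`. Tonelli's theorem justifies every exchange of integrals and sums.
-/

open MeasureTheory Real Set Filter Topology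
open scoped ENNReal

theorem lintegral_lintegral_lintegral_comm {α β γ : Type*} [MeasurableSpace α] [MeasurableSpace β]
    [MeasurableSpace γ] {μ : Measure α} {ν : Measure β} {ρ : Measure γ} [SFinite μ] [SFinite ν]
    [SFinite ρ] {f : α → β → γ → ℝ≥0∞} (hf : Measurable fun p : α × β × γ => f p.1 p.2.1 p.2.2) :
    ∫⁻ a, ∫⁻ b, ∫⁻ c, f a b c ∂ρ ∂ν ∂μ = ∫⁻ b, ∫⁻ c, ∫⁻ a, f a b c ∂μ ∂ρ ∂ν := by
  rw [lintegral_lintegral_swap (Measurable.lintegral_prod_right' (f := fun q : (α × β) × γ =>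
    f q.1.1 q.1.2 q.2) (by fun_prop)).aemeasurable]
  refine lintegral_congr fun b => lintegral_lintegral_swap ?_
  exact (hf.comp (by fun_prop : Measurable fun q : α × γ => (q.1, b, q.2))).aemeasurable

theorem ofReal_intervalIntegral_eq_setLIntegral_Ioo {f : ℝ → ℝ} {a b : ℝ} (hab : a ≤ b)
    (hf : IntervalIntegrable f volume a b) (hf_nonneg : ∀ x ∈ Ioo a b, 0 ≤ f x) :
    ENNReal.ofReal (∫ x in a..b, f x) = ∫⁻ x in Ioo a b, ENNReal.ofReal (f x) := by
  rw [intervalIntegral.integral_of_le hab, integral_Ioc_eq_integral_Ioo,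
    ofReal_integral_eq_lintegral_ofReal]
  · exact hf.1.mono_set Ioo_subset_Ioc_self
  · exact (ae_restrict_iff' measurableSet_Ioo).mpr (.of_forall hf_nonneg)

theorem ENNReal.ofReal_div_one_sub_eq_tsum {a x : ℝ} (ha : 0 ≤ a) (hx₀ : 0 ≤ x) (hx₁ : x < 1) :
    ENNReal.ofReal (a / (1 - x)) = ∑' n : ℕ, ENNReal.ofReal (a * x ^ n) := by
  rw [div_eq_mul_inv, ← tsum_geometric_of_lt_one hx₀ hx₁, ← tsum_mul_left,
    ENNReal.ofReal_tsum_of_nonneg (fun n => by positivity)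
      ((summable_geometric_of_lt_one hx₀ hx₁).mul_left a)]

theorem summable_one_div_nat_add_one_pow {p : ℕ} (hp : 1 < p) :
    Summable fun n : ℕ => 1 / ((n : ℝ) + 1) ^ p := by
  simpa using (summable_nat_add_iff 1).mpr (summable_one_div_nat_pow.mpr hp)

theorem hasSum_one_div_two_mul_add_one_pow {p : ℕ} (hp : 1 < p) :
    HasSum (fun n : ℕ => 1 / (2 * (n : ℝ) + 1) ^ p)
      ((1 - 1 / 2 ^ p) * ∑' n : ℕ, 1 / ((n : ℝ) + 1) ^ p) := by
  set f : ℕ → ℝ := fun n => 1 / ((n : ℝ) + 1) ^ p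
  have hf : Summable f := summable_one_div_nat_add_one_pow hp
  have heven : Summable fun k => f (2 * k) := hf.comp_injective (mul_right_injective₀ two_ne_zero)
  have hodd : Summable fun k => f (2 * k + 1) :=
    hf.comp_injective ((add_left_injective 1).comp (mul_right_injective₀ two_ne_zero))
  have hodd_eq : ∑' k, f (2 * k + 1) = 1 / 2 ^ p * ∑' n, f n := by
    rw [← tsum_mul_left]
    congr 1 with k
    simp only [f, Nat.cast_add, Nat.cast_mul, Nat.cast_ofNat, Nat.cast_one]
    rw [show 2 * (k : ℝ) + 1 + 1 = 2 * (k + 1) by ring, mul_pow]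
    field_simp
  have hsplit := tsum_even_add_odd heven hodd
  convert heven.hasSum using 1
  · simp [f]
  · linarith

theorem integral_one_div_one_add_mul_sq {c : ℝ} (hc : c ≠ 0) :
    ∫ x in (0 : ℝ)..1, 1 / (1 + (c * x) ^ 2) = arctan c / c := by
  rw [intervalIntegral.integral_comp_mul_left (fun x => 1 / (1 + x ^ 2)) hc,
    integral_one_div_one_add_sq]
  simp [div_eq_inv_mul]

theorem intervalIntegrable_neg_log_mul_pow (k : ℕ) (a b : ℝ) :
    IntervalIntegrable (fun x => -log x * x ^ k) volume a b :=
  intervalIntegral.intervalIntegrable_log'.neg.mul_continuousOn (continuous_pow k).continuousOn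

theorem hasDerivAt_pow_succ_mul_one_sub_log {x : ℝ} (hx : x ≠ 0) (k : ℕ) :
    HasDerivAt (fun x => x ^ (k + 1) * (1 - (k + 1) * log x) / (k + 1) ^ 2) (-log x * x ^ k) x := by
  refine ((hasDerivAt_pow (k + 1) x).mul (((hasDerivAt_log hx).const_mul ((k : ℝ) + 1)).const_sub 1)
    |>.div_const (((k : ℝ) + 1) ^ 2)).congr_deriv ?_
  have : (k : ℝ) + 1 ≠ 0 := by positivity
  field_simp
  push_cast
  ring

theorem integral_neg_log_mul_pow (k : ℕ) :
    ∫ x in (0 : ℝ)..1, -log x * x ^ k = 1 / (k + 1) ^ 2 := by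
  have hcont : Continuous fun x : ℝ => x ^ (k + 1) * (1 - (k + 1) * log x) / (k + 1) ^ 2 := by
    have : (fun x : ℝ => x ^ (k + 1) * (1 - (k + 1) * log x) / (k + 1) ^ 2) =
        fun x => (x ^ (k + 1) - (k + 1) * (x ^ k * (x * log x))) / (k + 1) ^ 2 := by
      ext x; ring
    rw [this]
    have := continuous_mul_log
    fun_prop
  rw [intervalIntegral.integral_eq_sub_of_hasDerivAt_of_le zero_le_one hcont.continuousOn
    (fun x hx => hasDerivAt_pow_succ_mul_one_sub_log hx.1.ne' k)
    (intervalIntegrable_neg_log_mul_pow k 0 1)]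
  simp

theorem tendsto_sq_add_div_one_add_sq {u : ℝ} (hu : u ≠ 0) (v : ℝ) :
    Tendsto (fun t => (t ^ 2 + v ^ 2) / (1 + (t * u) ^ 2)) atTop (𝓝 (u ^ 2)⁻¹) := by
  have hden : Tendsto (fun t : ℝ => 1 + (t * u) ^ 2) atTop atTop := by
    simp_rw [mul_pow]
    exact tendsto_atTop_add_const_left _ _
      ((tendsto_pow_atTop two_ne_zero).atTop_mul_const (by positivity : (0 : ℝ) < u ^ 2))
  have := (tendsto_const_nhds (x := v ^ 2 - (u ^ 2)⁻¹)).div_atTop hden |>.const_add (u ^ 2)⁻¹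
  rw [add_zero] at this
  refine this.congr fun t => ?_
  have : 1 + (t * u) ^ 2 ≠ 0 := by positivity
  field_simp
  ring

noncomputable def arctanKernel (t u v : ℝ) : ℝ := t / ((1 + (t * u) ^ 2) * (t ^ 2 + v ^ 2))

theorem arctanKernel_nonneg {t : ℝ} (ht : 0 ≤ t) (u v : ℝ) : 0 ≤ arctanKernel t u v := by
  unfold arctanKernel
  positivity

theorem arctanKernel_eq_mul {t : ℝ} (ht : t ≠ 0) (u v : ℝ) :
    arctanKernel t u v = 1 / (1 + (t * u) ^ 2) * (t⁻¹ * (1 / (1 + (t⁻¹ * v) ^ 2))) := by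
  unfold arctanKernel
  field_simp

theorem lintegral_arctanKernel_unitSquare {t : ℝ} (ht : 0 < t) :
    ∫⁻ u in Ioo 0 1, ∫⁻ v in Ioo 0 1, ENNReal.ofReal (arctanKernel t u v) =
      ENNReal.ofReal (arctan t * arctan (1 / t) / t) := by
  have hlintegral (c : ℝ) (hc : c ≠ 0) :
      ∫⁻ x in Ioo 0 1, ENNReal.ofReal (1 / (1 + (c * x) ^ 2)) = ENNReal.ofReal (arctan c / c) := by
    rw [← integral_one_div_one_add_mul_sq hc,
      ofReal_intervalIntegral_eq_setLIntegral_Ioo zero_le_one _ fun x _ => by positivity]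
    exact (continuous_const.div (by fun_prop) fun x => by positivity).intervalIntegrable _ _
  have hsplit (u v : ℝ) : ENNReal.ofReal (arctanKernel t u v) =
      ENNReal.ofReal (1 / (1 + (t * u) ^ 2)) *
        (ENNReal.ofReal t⁻¹ * ENNReal.ofReal (1 / (1 + (t⁻¹ * v) ^ 2))) := by
    rw [arctanKernel_eq_mul ht.ne', ENNReal.ofReal_mul (by positivity),
      ENNReal.ofReal_mul (by positivity)]
  simp_rw [hsplit]
  rw [lintegral_lintegral_mul (by fun_prop) (by fun_prop),
    lintegral_const_mul' _ _ ENNReal.ofReal_ne_top, hlintegral t ht.ne',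
    hlintegral t⁻¹ (inv_ne_zero ht.ne'),
    ← ENNReal.ofReal_mul (by positivity), ← ENNReal.ofReal_mul (by positivity)]
  congr 1
  field_simp

theorem hasDerivAt_log_sq_add_sub_log_one_add_sq {u v : ℝ} (hv : v ≠ 0) (huv : (u * v) ^ 2 ≠ 1)
    (t : ℝ) :
    HasDerivAt (fun t => (log (t ^ 2 + v ^ 2) - log (1 + (t * u) ^ 2)) / (2 * (1 - (u * v) ^ 2)))
      (arctanKernel t u v) t := by
  have h₁ : t ^ 2 + v ^ 2 ≠ 0 := by positivity
  have h₂ : 1 + (t * u) ^ 2 ≠ 0 := by positivity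
  have h₃ : 1 - (u * v) ^ 2 ≠ 0 := sub_ne_zero.mpr huv.symm
  refine ((((hasDerivAt_id' t).pow 2).add_const (v ^ 2)).log h₁ |>.sub
    ((((hasDerivAt_id' t).mul_const u).pow 2).const_add 1 |>.log h₂)
    |>.div_const (2 * (1 - (u * v) ^ 2))).congr_deriv ?_
  simp only [arctanKernel, Pi.pow_apply]
  rw [eq_div_iff (by positivity), div_mul_eq_mul_div, div_eq_iff (mul_ne_zero two_ne_zero h₃)]
  field_simp
  ring

theorem lintegral_arctanKernel_Ioi {u v : ℝ} (hu : u ≠ 0) (hv : v ≠ 0) (huv : (u * v) ^ 2 ≠ 1) :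
    ∫⁻ t in Ioi 0, ENNReal.ofReal (arctanKernel t u v) =
      ENNReal.ofReal (-log (u * v) / (1 - (u * v) ^ 2)) := by
  set F := fun t => (log (t ^ 2 + v ^ 2) - log (1 + (t * u) ^ 2)) / (2 * (1 - (u * v) ^ 2))
  have hF : ∀ t ∈ Ici 0, HasDerivAt F (arctanKernel t u v) t :=
    fun t _ => hasDerivAt_log_sq_add_sub_log_one_add_sq hv huv t
  have hK : ∀ t ∈ Ioi 0, 0 ≤ arctanKernel t u v :=
    fun t ht => arctanKernel_nonneg (mem_Ioi.mp ht).le u v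
  have hlim : Tendsto F atTop (𝓝 (log (u ^ 2)⁻¹ / (2 * (1 - (u * v) ^ 2)))) := by
    refine (((continuousAt_log (by positivity)).tendsto.comp
      (tendsto_sq_add_div_one_add_sq hu v)).div_const _).congr fun t => ?_
    simp only [F, Function.comp_apply]
    rw [log_div (by positivity) (by positivity)]
  rw [← ofReal_integral_eq_lintegral_ofReal (integrableOn_Ioi_deriv_of_nonneg' hF hK hlim)
    ((ae_restrict_iff' measurableSet_Ioi).mpr (.of_forall hK)),
    integral_Ioi_of_hasDerivAt_of_nonneg' hF hK hlim]
  congr 1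
  have hD : 1 - (u * v) ^ 2 ≠ 0 := sub_ne_zero.mpr huv.symm
  simp only [F, ne_eq, OfNat.ofNat_ne_zero, not_false_eq_true, zero_pow, zero_add, zero_mul,
    add_zero, log_one, sub_zero, log_inv, log_pow, log_mul hu hv]
  generalize 1 - (u * v) ^ 2 = D at hD ⊢
  field_simp
  ring

theorem lintegral_neg_log_mul_mul_pow_unitSquare (k : ℕ) :
    ∫⁻ u in Ioo 0 1, ∫⁻ v in Ioo 0 1, ENNReal.ofReal (-log (u * v) * (u * v) ^ k) =
      ENNReal.ofReal (2 / (k + 1) ^ 3) := by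
  set f := fun x : ℝ => ENNReal.ofReal (-log x * x ^ k)
  set g := fun x : ℝ => ENNReal.ofReal (x ^ k)
  have hf : Measurable f := by fun_prop
  have hg : Measurable g := by fun_prop
  have hf_nonneg (x : ℝ) (hx : x ∈ Ioo (0 : ℝ) 1) : 0 ≤ -log x * x ^ k :=
    mul_nonneg (neg_nonneg.mpr (log_nonpos hx.1.le hx.2.le)) (pow_nonneg hx.1.le k)
  have hf_int : ∫⁻ x in Ioo 0 1, f x = ENNReal.ofReal (1 / (k + 1) ^ 2) := by
    rw [← integral_neg_log_mul_pow, ofReal_intervalIntegral_eq_setLIntegral_Ioo zero_le_one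
      (intervalIntegrable_neg_log_mul_pow k 0 1) hf_nonneg]
  have hg_int : ∫⁻ x in Ioo 0 1, g x = ENNReal.ofReal (1 / (k + 1)) := by
    rw [← ofReal_intervalIntegral_eq_setLIntegral_Ioo zero_le_one
      ((continuous_pow k).intervalIntegrable 0 1) fun x hx => pow_nonneg hx.1.le k, integral_pow]
    simp
  have hsplit : ∀ u ∈ Ioo (0 : ℝ) 1, ∀ v ∈ Ioo (0 : ℝ) 1,
      ENNReal.ofReal (-log (u * v) * (u * v) ^ k) = f u * g v + g u * f v := by
    intro u hu v hv
    simp only [f, g]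
    rw [← ENNReal.ofReal_mul (hf_nonneg u hu), ← ENNReal.ofReal_mul (pow_nonneg hu.1.le k),
      ← ENNReal.ofReal_add (mul_nonneg (hf_nonneg u hu) (pow_nonneg hv.1.le k))
        (mul_nonneg (pow_nonneg hu.1.le k) (hf_nonneg v hv)), log_mul hu.1.ne' hv.1.ne']
    ring_nf
  rw [setLIntegral_congr_fun measurableSet_Ioo fun u hu =>
    setLIntegral_congr_fun measurableSet_Ioo fun v hv => hsplit u hu v hv]
  simp_rw [lintegral_add_left (hg.const_mul _), lintegral_const_mul _ hg, lintegral_const_mul _ hf]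
  rw [lintegral_add_left (hf.mul_const _), lintegral_mul_const _ hf, lintegral_mul_const _ hg,
    hf_int, hg_int, ← ENNReal.ofReal_mul (by positivity), ← ENNReal.ofReal_mul (by positivity),
    ← ENNReal.ofReal_add (by positivity) (by positivity)]
  congr 1
  field_simp
  ring

theorem lintegral_arctan_mul_arctan_one_div_div :
    ∫⁻ t in Ioi 0, ENNReal.ofReal (arctan t * arctan (1 / t) / t) =
      ENNReal.ofReal (7 / 4 * ∑' n : ℕ, 1 / ((n : ℝ) + 1) ^ 3) := by
  have hsum_odd := (hasSum_one_div_two_mul_add_one_pow (p := 3) (by norm_num)).mul_left 2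
  have hgeom : ∀ u ∈ Ioo (0 : ℝ) 1, ∀ v ∈ Ioo (0 : ℝ) 1,
      ∫⁻ t in Ioi 0, ENNReal.ofReal (arctanKernel t u v) =
        ∑' n : ℕ, ENNReal.ofReal (-log (u * v) * (u * v) ^ (2 * n)) := by
    intro u hu v hv
    have huv₀ : 0 < u * v := mul_pos hu.1 hv.1
    have huv₁ : u * v < 1 := mul_lt_one_of_nonneg_of_lt_one_left hu.1.le hu.2 hv.2.le
    have hsq : (u * v) ^ 2 < 1 := pow_lt_one₀ huv₀.le huv₁ two_ne_zero
    simp_rw [lintegral_arctanKernel_Ioi hu.1.ne' hv.1.ne' hsq.ne, pow_mul]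
    exact ENNReal.ofReal_div_one_sub_eq_tsum (neg_nonneg.mpr (log_nonpos huv₀.le huv₁.le))
      (by positivity) hsq
  calc ∫⁻ t in Ioi 0, ENNReal.ofReal (arctan t * arctan (1 / t) / t)
      = ∫⁻ t in Ioi 0, ∫⁻ u in Ioo 0 1, ∫⁻ v in Ioo 0 1, ENNReal.ofReal (arctanKernel t u v) :=
        setLIntegral_congr_fun measurableSet_Ioi fun t ht =>
          (lintegral_arctanKernel_unitSquare ht).symm
    _ = ∫⁻ u in Ioo 0 1, ∫⁻ v in Ioo 0 1, ∫⁻ t in Ioi 0, ENNReal.ofReal (arctanKernel t u v) :=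
        lintegral_lintegral_lintegral_comm (by unfold arctanKernel; fun_prop)
    _ = ∫⁻ u in Ioo 0 1, ∫⁻ v in Ioo 0 1, ∑' n : ℕ,
          ENNReal.ofReal (-log (u * v) * (u * v) ^ (2 * n)) :=
        setLIntegral_congr_fun measurableSet_Ioo fun u hu =>
          setLIntegral_congr_fun measurableSet_Ioo fun v hv => hgeom u hu v hv
    _ = ∑' n : ℕ, ∫⁻ u in Ioo 0 1, ∫⁻ v in Ioo 0 1,
          ENNReal.ofReal (-log (u * v) * (u * v) ^ (2 * n)) := by
        have hmeas (n : ℕ) : Measurable fun p : ℝ × ℝ =>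
            ENNReal.ofReal (-log (p.1 * p.2) * (p.1 * p.2) ^ (2 * n)) := by fun_prop
        rw [← lintegral_tsum fun n => (hmeas n).lintegral_prod_right'.aemeasurable]
        exact lintegral_congr fun u =>
          lintegral_tsum fun n => ((hmeas n).comp measurable_prodMk_left).aemeasurable
    _ = ∑' n : ℕ, ENNReal.ofReal (2 * (1 / (2 * (n : ℝ) + 1) ^ 3)) := by
        congr 1 with n
        rw [lintegral_neg_log_mul_mul_pow_unitSquare]
        push_cast
        ring_nf
    _ = ENNReal.ofReal (7 / 4 * ∑' n : ℕ, 1 / ((n : ℝ) + 1) ^ 3) := by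
        rw [← ENNReal.ofReal_tsum_of_nonneg (fun n => by positivity) hsum_odd.summable,
          hsum_odd.tsum_eq]
        congr 1
        ring

theorem stmt16 :
    ∫ t in Set.Ioi (0 : ℝ), Real.arctan t * Real.arctan (1 / t) / t =
      (7 / 4) * ∑' n : ℕ, 1 / ((n : ℝ) + 1) ^ 3 := by
  have hnonneg : 0 ≤ᵐ[volume.restrict (Ioi 0)] fun t => arctan t * arctan (1 / t) / t :=
    (ae_restrict_iff' measurableSet_Ioi).mpr (.of_forall fun t (ht : 0 < t) => by positivity)
  rw [integral_eq_lintegral_of_nonneg_ae hnonneg (Measurable.aestronglyMeasurable (by fun_prop)),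
    lintegral_arctan_mul_arctan_one_div_div, ENNReal.toReal_ofReal]
  exact mul_nonneg (by norm_num) (tsum_nonneg fun n => by positivity)
end
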